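/- Let G be a finite non-bipartite graph. If χ(G) ≤ 10, then the second multichromatic number of G^{1/3} equals 5, i.e., χ_2(G^{1/3}) = 5; otherwise χ_2(G^{1/3}) = 6. -/

import Mathlib

open SimpleGraph

/-- The subdivision `G^{1/k}`: every edge of `G` is replaced by a path of length `k`.
An interior point at distance `i` from `u` and `k - i` from `v` along the edge `uv`
(`0 < i < k`) is recorded as the unordered pair `{(u, i), (v, k - i)}`. -/
def subdiv {V : Type*} (G : SimpleGraph V) (k : ℕ) :
    SimpleGraph (V ⊕ {p : Sym2 (V × ℕ) //
      ∃ u v i, G.Adj u v ∧ 0 < i ∧ i < k ∧ p = s((u, i), (v, k - i))}) :=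
  SimpleGraph.fromRel fun x y =>
    match x, y with
    | Sum.inl a, Sum.inl b => k = 1 ∧ G.Adj a b
    | Sum.inl a, Sum.inr p => ∃ v, G.Adj a v ∧ p.1 = s((a, 1), (v, k - 1))
    | Sum.inr _, Sum.inl _ => False
    | Sum.inr p, Sum.inr q => ∃ u v i, G.Adj u v ∧ 0 < i ∧ i + 1 < k ∧
        p.1 = s((u, i), (v, k - i)) ∧ q.1 = s((u, i + 1), (v, k - i - 1))

/-- The Kneser graph `KG(m, n)`: vertices are the `n`-element subsets of an `m`-set,
adjacent iff disjoint. -/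
def kneserG (m n : ℕ) : SimpleGraph {A : Finset (Fin m) // A.card = n} :=
  SimpleGraph.fromRel fun A B => Disjoint A.1 B.1

/-- The `n`-th multichromatic number: the least `m` such that `G` admits a homomorphism
to the Kneser graph `KG(m, n)`. -/
noncomputable def multiChrom {V : Type*} (G : SimpleGraph V) (n : ℕ) : ℕ :=
  sInf {m : ℕ | Nonempty (G →g kneserG m n)}

/-- Interior vertex type of `subdiv G 3`. -/
abbrev I3 {V : Type*} (G : SimpleGraph V) :=
  {p : Sym2 (V × ℕ) // ∃ u v i, G.Adj u v ∧ 0 < i ∧ i < 3 ∧ p = s((u, i), (v, 3 - i))}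

section SubdivLemmas
variable {V : Type*} {G : SimpleGraph V}

lemma I3_rep (p : I3 G) : ∃ u v, G.Adj u v ∧ p.1 = s((u, 1), (v, 2)) := by
  obtain ⟨u, v, i, huv, h0, h3, hp⟩ := p.2
  interval_cases i
  · exact ⟨u, v, huv, by simpa using hp⟩
  · refine ⟨v, u, huv.symm, ?_⟩
    rw [show p.1 = s((u, 2), (v, 1)) from by simpa using hp]
    exact Sym2.eq_swap

lemma mk12_inj {u v u' v' : V} (h : (s((u, (1:ℕ)), (v, 2))) = s((u', 1), (v', 2))) :
    u = u' ∧ v = v' := by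
  rw [Sym2.eq_iff] at h
  rcases h with ⟨h1, h2⟩ | ⟨h1, h2⟩
  · exact ⟨congrArg Prod.fst h1, congrArg Prod.fst h2⟩
  · exact absurd (congrArg Prod.snd h1) (by norm_num)

/-- The two interior points of an edge form a path of length 3 in the subdivision. -/
lemma path3 {u v : V} (huv : G.Adj u v) :
    ∃ p q : I3 G, (subdiv G 3).Adj (Sum.inl u) (Sum.inr p) ∧
      (subdiv G 3).Adj (Sum.inr p) (Sum.inr q) ∧ (subdiv G 3).Adj (Sum.inr q) (Sum.inl v) := by
  refine ⟨⟨s((u,1),(v,2)), u, v, 1, huv, one_pos, by norm_num, by norm_num⟩,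
          ⟨s((u,2),(v,1)), u, v, 2, huv, two_pos, by norm_num, by norm_num⟩, ?_, ?_, ?_⟩
  · rw [subdiv, fromRel_adj]
    exact ⟨by simp, Or.inl ⟨v, huv, by norm_num⟩⟩
  · rw [subdiv, fromRel_adj]
    refine ⟨?_, Or.inl ⟨u, v, 1, huv, one_pos, by norm_num, by norm_num, by norm_num⟩⟩
    intro h
    rw [Sum.inr.injEq, Subtype.mk.injEq, Sym2.eq_iff] at h
    rcases h with ⟨h1, _⟩ | ⟨h1, _⟩
    · exact absurd (congrArg Prod.snd h1) (by norm_num)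
    · exact huv.ne (congrArg Prod.fst h1)
  · rw [subdiv, fromRel_adj]
    refine ⟨by simp, Or.inr ⟨u, huv.symm, ?_⟩⟩
    show s((u,2),(v,1)) = s((v,1),(u,3-1))
    norm_num [Sym2.eq_iff]

/-- Generic homomorphism builder out of the 3-subdivision: it suffices to give the image
`f` of original vertices and, for each (ordered) pair of colors, a walk of length 3. -/
lemma hom_builder {W : Type*} [Fintype V] (H : SimpleGraph W) (f : V → W) (A B : W → W → W)
    (h : ∀ u v, G.Adj u v → H.Adj (f u) (A (f u) (f v)) ∧
      H.Adj (A (f u) (f v)) (B (f u) (f v)) ∧ H.Adj (B (f u) (f v)) (f v)) :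
    Nonempty (subdiv G 3 →g H) := by
  classical
  choose U Vf hadj hmk using fun p : I3 G => I3_rep p
  let e := Fintype.equivFin V
  let g : (V ⊕ I3 G) → W := Sum.elim f
    (fun p => if e (U p) ≤ e (Vf p) then A (f (U p)) (f (Vf p)) else B (f (Vf p)) (f (U p)))
  have key1 : ∀ (a : V) (q : I3 G), (∃ w, G.Adj a w ∧ q.1 = s((a, 1), (w, 3 - 1))) →
      H.Adj (g (Sum.inl a)) (g (Sum.inr q)) := by
    rintro a q ⟨w, haw, hq⟩
    norm_num at hq
    obtain ⟨hU, hV⟩ := mk12_inj ((hmk q).symm.trans hq)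
    show H.Adj (f a) _
    simp only [g, Sum.elim_inr, hU, hV]
    split_ifs with hle
    · exact (h a w haw).1
    · exact ((h w a haw.symm).2.2).symm
  have key2 : ∀ (p q : I3 G), (∃ u v i, G.Adj u v ∧ 0 < i ∧ i + 1 < 3 ∧
      p.1 = s((u, i), (v, 3 - i)) ∧ q.1 = s((u, i + 1), (v, 3 - i - 1))) →
      H.Adj (g (Sum.inr p)) (g (Sum.inr q)) := by
    rintro p q ⟨u, v, i, huv, h0, h3, hp, hq⟩
    have hi : i = 1 := by omega
    subst hi
    norm_num at hp hq
    have hq' : q.1 = s((v, 1), (u, 2)) := hq.trans Sym2.eq_swap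
    obtain ⟨hU1, hV1⟩ := mk12_inj ((hmk p).symm.trans hp)
    obtain ⟨hU2, hV2⟩ := mk12_inj ((hmk q).symm.trans hq')
    simp only [g, Sum.elim_inr, hU1, hV1, hU2, hV2]
    rcases lt_trichotomy (e u) (e v) with hlt | heq | hlt
    · rw [if_pos hlt.le, if_neg (not_le.2 hlt)]
      exact (h u v huv).2.1
    · exact absurd (e.injective heq) huv.ne
    · rw [if_neg (not_le.2 hlt), if_pos hlt.le]
      exact ((h v u huv.symm).2.1).symm
  refine ⟨⟨g, ?_⟩⟩
  intro x y hxy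
  rw [subdiv, fromRel_adj] at hxy
  obtain ⟨hne, hr | hr⟩ := hxy
  · match x, y with
    | Sum.inl a, Sum.inl b => exact absurd hr.1 (by norm_num)
    | Sum.inl a, Sum.inr q => exact key1 a q hr
    | Sum.inr p, Sum.inl b => exact hr.elim
    | Sum.inr p, Sum.inr q => exact key2 p q hr
  · match x, y with
    | Sum.inl a, Sum.inl b => exact absurd hr.1 (by norm_num)
    | Sum.inr q, Sum.inl a => exact (key1 a q hr).symm
    | Sum.inl b, Sum.inr p => exact hr.elim
    | Sum.inr q, Sum.inr p => exact (key2 p q hr).symm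

/-- If `G` is not 2-colorable, neither is its 3-subdivision. -/
lemma subdiv_not_col2 (hG : ¬ G.Colorable 2) : ¬ (subdiv G 3).Colorable 2 := by
  intro h
  obtain ⟨C⟩ := h
  apply hG
  refine ⟨Coloring.mk (fun u => C (Sum.inl u)) ?_⟩
  intro u v huv heq
  obtain ⟨p, q, h1, h2, h3⟩ := path3 huv
  have e1 := C.valid h1
  have e2 := C.valid h2
  have e3 := C.valid h3
  have key : ∀ x a b y : Fin 2, x ≠ a → a ≠ b → b ≠ y → x ≠ y := by decide
  exact key _ _ _ _ e1 e2 e3 heq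

end SubdivLemmas

section KneserLemmas

lemma kneser_adj_of_disjoint {m : ℕ} {A B : {A : Finset (Fin m) // A.card = 2}}
    (h : Disjoint A.1 B.1) : (kneserG m 2).Adj A B := by
  rw [kneserG, fromRel_adj]
  refine ⟨fun hAB => ?_, Or.inl h⟩
  subst hAB
  have h2 := A.2
  rw [(Finset.disjoint_self_iff_empty A.1).1 h] at h2
  simp at h2

lemma kneser_disjoint_of_adj {m : ℕ} {A B : {A : Finset (Fin m) // A.card = 2}}
    (h : (kneserG m 2).Adj A B) : Disjoint A.1 B.1 := by
  rw [kneserG, fromRel_adj] at h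
  rcases h.2 with h' | h'
  · exact h'
  · exact h'.symm

set_option maxHeartbeats 1000000 in
/-- In the Petersen graph `KG(5,2)`, any two distinct vertices are joined by a walk of
length 3. -/
lemma walk52 : ∀ x y : {A : Finset (Fin 5) // A.card = 2}, x ≠ y →
    ∃ a b : {A : Finset (Fin 5) // A.card = 2},
      Disjoint x.1 a.1 ∧ Disjoint a.1 b.1 ∧ Disjoint b.1 y.1 := by decide

lemma card_W5 : Fintype.card {A : Finset (Fin 5) // A.card = 2} = 10 := by
  rw [Fintype.card_finset_len]; rfl

/-- For `m ≤ 4`, the Kneser graph `KG(m,2)` is bipartite. -/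
lemma kneser_col2 {m : ℕ} (hm : m ≤ 4) : (kneserG m 2).Colorable 2 := by
  classical
  have C : (kneserG m 2).Coloring Bool := by
    refine Coloring.mk (fun A => decide (∃ a ∈ A.1, a.val = 0)) ?_
    intro A B hAB
    have hd := kneser_disjoint_of_adj hAB
    have hcard : (A.1 ∪ B.1).card = 4 := by
      rw [Finset.card_union_of_disjoint hd, A.2, B.2]
    have h4m : 4 ≤ m := by
      have := Finset.card_le_univ (A.1 ∪ B.1)
      simpa [hcard] using this
    have hm4 : m = 4 := le_antisymm hm h4m
    subst hm4
    have huniv : A.1 ∪ B.1 = Finset.univ :=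
      Finset.eq_univ_of_card _ (by rw [hcard]; simp)
    have h0 : (0 : Fin 4) ∈ A.1 ∪ B.1 := huniv ▸ Finset.mem_univ _
    intro hcol
    rcases Finset.mem_union.1 h0 with h | h
    · have ha : ∃ a ∈ A.1, a.val = 0 := ⟨0, h, rfl⟩
      have hb : ¬ ∃ a ∈ B.1, a.val = 0 := by
        rintro ⟨a, haB, ha0⟩
        exact (Finset.disjoint_left.1 hd (show a ∈ A.1 from (Fin.ext ha0 : a = 0) ▸ h)) haB
      simp [ha, hb] at hcol
      exact hb ⟨0, hcol.1 h, rfl⟩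
    · have hb : ∃ a ∈ B.1, a.val = 0 := ⟨0, h, rfl⟩
      have ha : ¬ ∃ a ∈ A.1, a.val = 0 := by
        rintro ⟨a, haA, ha0⟩
        exact (Finset.disjoint_right.1 hd (show a ∈ B.1 from (Fin.ext ha0 : a = 0) ▸ h)) haA
      simp [ha, hb] at hcol
      exact ha ⟨0, hcol.2 h, rfl⟩
  simpa using C.colorable

end KneserLemmas

section MainLemmas
variable {V : Type*} [Fintype V] {G : SimpleGraph V}

/-- Given a proper 10-coloring, the 3-subdivision maps homomorphically to `KG(5,2)`. -/
lemma hom_52 (hc : G.Colorable 10) : Nonempty (subdiv G 3 →g kneserG 5 2) := by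
  classical
  obtain ⟨C⟩ := hc
  let e10 : {A : Finset (Fin 5) // A.card = 2} ≃ Fin 10 := Fintype.equivFinOfCardEq card_W5
  let f := fun u => e10.symm (C u)
  choose a b h1 h2 h3 using walk52
  refine hom_builder _ f (fun x y => if h : x = y then x else a x y h)
    (fun x y => if h : x = y then x else b x y h) ?_
  intro u v huv
  have hne : f u ≠ f v := fun h => C.valid huv (e10.symm.injective h)
  simp only [dif_neg hne]
  exact ⟨kneser_adj_of_disjoint (h1 _ _ hne), kneser_adj_of_disjoint (h2 _ _ hne),
    kneser_adj_of_disjoint (h3 _ _ hne)⟩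

/-- The 3-subdivision of any graph maps homomorphically to `KG(6,2)` (via a triangle). -/
lemma hom_62 : Nonempty (subdiv G 3 →g kneserG 6 2) := by
  let vA : {A : Finset (Fin 6) // A.card = 2} := ⟨{0,1}, by decide⟩
  let vB : {A : Finset (Fin 6) // A.card = 2} := ⟨{2,3}, by decide⟩
  let vC : {A : Finset (Fin 6) // A.card = 2} := ⟨{4,5}, by decide⟩
  refine hom_builder _ (fun _ => vA) (fun _ _ => vB) (fun _ _ => vC) ?_
  intro u v _
  refine ⟨kneser_adj_of_disjoint ?_, kneser_adj_of_disjoint ?_, kneser_adj_of_disjoint ?_⟩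
  · show Disjoint ({0,1} : Finset (Fin 6)) {2,3}
    decide
  · show Disjoint ({2,3} : Finset (Fin 6)) {4,5}
    decide
  · show Disjoint ({4,5} : Finset (Fin 6)) {0,1}
    decide

/-- Conversely, a homomorphism of the 3-subdivision to `KG(5,2)` yields a 10-coloring. -/
lemma col10_of_hom52 (h : Nonempty (subdiv G 3 →g kneserG 5 2)) : G.Colorable 10 := by
  obtain ⟨φ⟩ := h
  have C : G.Coloring {A : Finset (Fin 5) // A.card = 2} := by
    refine Coloring.mk (fun u => φ (Sum.inl u)) ?_
    intro u v huv heq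
    obtain ⟨p, q, h1, h2, h3⟩ := path3 huv
    have d1 := kneser_disjoint_of_adj (φ.map_rel h1)
    have d2 := kneser_disjoint_of_adj (φ.map_rel h2)
    have d3 := kneser_disjoint_of_adj (φ.map_rel h3)
    have heq' : φ (Sum.inl u) = φ (Sum.inl v) := heq
    rw [heq'] at d1
    set x := φ (Sum.inl v)
    set A := φ (Sum.inr p)
    set B := φ (Sum.inr q)
    have hd : Disjoint (x.1 ∪ A.1) B.1 :=
      Finset.disjoint_union_left.2 ⟨d3.symm, d2⟩
    have hcard : (x.1 ∪ A.1 ∪ B.1).card = 6 := by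
      rw [Finset.card_union_of_disjoint hd, Finset.card_union_of_disjoint d1, x.2, A.2, B.2]
    have := Finset.card_le_univ (x.1 ∪ A.1 ∪ B.1)
    rw [hcard] at this
    simp at this
  have := C.colorable
  rwa [card_W5] at this

end MainLemmas

/-- For a finite non-bipartite graph `G`: if `χ(G) ≤ 10` then `χ_2(G^{1/3}) = 5`, and
otherwise `χ_2(G^{1/3}) = 6`. -/
theorem stmt_19 {V : Type*} [Fintype V] (G : SimpleGraph V) (hG : ¬ G.Colorable 2) :
    (G.chromaticNumber ≤ (10 : ℕ∞) → multiChrom (subdiv G 3) 2 = 5) ∧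
    (¬ G.chromaticNumber ≤ (10 : ℕ∞) → multiChrom (subdiv G 3) 2 = 6) := by
  have h10 : G.chromaticNumber ≤ (10 : ℕ∞) ↔ G.Colorable 10 := by
    exact_mod_cast G.chromaticNumber_le_iff_colorable
  have no_hom_le4 : ∀ m : ℕ, m ≤ 4 → ¬ Nonempty (subdiv G 3 →g kneserG m 2) := by
    rintro m hm ⟨φ⟩
    exact subdiv_not_col2 hG ⟨((kneser_col2 hm).some).comp φ⟩
  constructor
  · intro h
    have h5 : (5 : ℕ) ∈ {m : ℕ | Nonempty (subdiv G 3 →g kneserG m 2)} := hom_52 (h10.1 h)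
    refine le_antisymm (Nat.sInf_le h5) (le_csInf ⟨5, h5⟩ ?_)
    intro m hm
    by_contra hlt
    exact no_hom_le4 m (by omega) hm
  · intro h
    have hnc : ¬ G.Colorable 10 := fun hc => h (h10.2 hc)
    have h6 : (6 : ℕ) ∈ {m : ℕ | Nonempty (subdiv G 3 →g kneserG m 2)} := hom_62
    refine le_antisymm (Nat.sInf_le h6) (le_csInf ⟨6, h6⟩ ?_)
    intro m hm
    by_contra hlt
    rcases Nat.lt_or_ge m 5 with h5 | h5
    · exact no_hom_le4 m (by omega) hm
    · have hm5 : m = 5 := by omega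
      subst hm5
      exact hnc (col10_of_hom52 hm)
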